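/- arXiv:2406.01504 — 2 statements merged into one kernel-verified Lean document; each statement's English description precedes it below -/
import Mathlib

section
/- There is no Šoltés hypergraph of order at most 4. -/
variable {α : Type*} {β : Type*}

/-- A hypergraph: a finite vertex set together with a set of edges,
each an at-least-2-element subset of the vertex set. -/
structure Hypergraph' (α : Type*) where
  verts : Finset α
  edges : Finset (Finset α)
  edge_sub : ∀ e ∈ edges, e ⊆ verts
  edge_card : ∀ e ∈ edges, 2 ≤ e.card

namespace Hypergraph'

/-- The 2-section graph of a hypergraph: two distinct vertices are adjacent
iff some edge contains both. -/
def twoSection (H : Hypergraph' α) : SimpleGraph α where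
  Adj u v := u ≠ v ∧ ∃ e ∈ H.edges, u ∈ e ∧ v ∈ e
  symm := by
    constructor
    rintro u v ⟨huv, e, he, hu, hv⟩
    exact ⟨huv.symm, e, he, hv, hu⟩
  loopless := by
    constructor
    rintro u ⟨h, -⟩
    exact h rfl

/-- Distance between two vertices: graph distance in the 2-section. -/
noncomputable def dist (H : Hypergraph' α) (u v : α) : ℕ :=
  H.twoSection.dist u v

/-- A hypergraph is connected if every two of its vertices are joined by a path. -/
def Connected (H : Hypergraph' α) : Prop :=
  ∀ u ∈ H.verts, ∀ v ∈ H.verts, H.twoSection.Reachable u v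

/-- The Wiener index (total distance): the sum of distances over all
unordered pairs of distinct vertices. -/
noncomputable def wiener [DecidableEq α] (H : Hypergraph' α) : ℕ :=
  ∑ p ∈ H.verts.sym2.filter (fun p => ¬ p.IsDiag),
    Sym2.lift ⟨fun u v => H.dist u v, fun _ _ => SimpleGraph.dist_comm⟩ p

/-- Vertex deletion: remove the vertex and all edges containing it. -/
def delete [DecidableEq α] (H : Hypergraph' α) (v : α) : Hypergraph' α where
  verts := H.verts.erase v
  edges := H.edges.filter fun e => v ∉ e
  edge_sub := by
    intro e he x hx
    rw [Finset.mem_filter] at he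
    exact Finset.mem_erase.mpr ⟨fun h => he.2 (h ▸ hx), H.edge_sub e he.1 hx⟩
  edge_card := fun e he => H.edge_card e (Finset.mem_filter.mp he).1

/-- A Šoltés hypergraph: a connected hypergraph on at least 2 vertices such that
deleting any vertex leaves a connected hypergraph with the same Wiener index. -/
def IsSoltes [DecidableEq α] (H : Hypergraph' α) : Prop :=
  2 ≤ H.verts.card ∧ H.Connected ∧
    ∀ v ∈ H.verts, (H.delete v).Connected ∧ (H.delete v).wiener = H.wiener

/-- The diameter: the maximum distance over unordered pairs of distinct vertices. -/
noncomputable def diam [DecidableEq α] (H : Hypergraph' α) : ℕ :=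
  H.verts.offDiag.sup fun p => H.dist p.1 p.2

/-- The degree of a vertex: the number of edges containing it. -/
def degree [DecidableEq α] (H : Hypergraph' α) (v : α) : ℕ :=
  (H.edges.filter fun e => v ∈ e).card

/-- Hypergraph isomorphism: a bijection between the vertex sets mapping
edges onto edges. -/
def IsIsoTo [DecidableEq β] (H : Hypergraph' α) (H' : Hypergraph' β) : Prop :=
  ∃ f : α → β, Set.InjOn f ↑H.verts ∧ H'.verts = H.verts.image f ∧
    H'.edges = H.edges.image fun e => e.image f

end Hypergraph'

/-!
In a connected hypergraph of order `n` every pair of distinct vertices is at distance at least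
`1`, so `W ≥ C(n, 2)`. Conversely, on `m` vertices a shortest path has fewer than `m` vertices,
so every distance is at most `m - 1`, and some pair is at distance exactly `1`; hence
`W ≤ 1 + (C(m, 2) - 1)(m - 1)` when `m ≥ 2`, and `W = 0` when `m = 1`. If `H` were Šoltés of
order `n ∈ {2, 3, 4}`, deleting a vertex would leave a connected hypergraph of order `n - 1` with
Wiener index at most `0, 1, 5` respectively, while `W(H) ≥ 1, 3, 6`.
-/

namespace Finset

theorem card_sym2_filter_not_isDiag [DecidableEq α] (s : Finset α) :
    #{z ∈ s.sym2 | ¬z.IsDiag} = (#s).choose 2 := by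
  rw [sym2_eq_image, Sym2.filter_image_mk_not_isDiag, Sym2.card_image_offDiag]

theorem forall_mem_sym2_filter_not_isDiag [DecidableEq α] {s : Finset α} {P : Sym2 α → Prop} :
    (∀ z ∈ {z ∈ s.sym2 | ¬z.IsDiag}, P z) ↔ ∀ u ∈ s, ∀ v ∈ s, u ≠ v → P s(u, v) := by
  refine ⟨fun h u hu v hv huv => h _ ?_, fun h z => z.ind fun u v hz => ?_⟩
  · simpa [mem_filter, mk_mem_sym2_iff] using ⟨⟨hu, hv⟩, huv⟩
  · simp only [mem_filter, mk_mem_sym2_iff, Sym2.mk_isDiag_iff] at hz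
    exact h u hz.1.1 v hz.1.2 hz.2

end Finset

open Finset

namespace Hypergraph'

variable (H : Hypergraph' α)

theorem mem_verts_of_adj {u w : α} (h : H.twoSection.Adj u w) : w ∈ H.verts := by
  obtain ⟨-, e, he, -, hw⟩ := h
  exact H.edge_sub e he hw

theorem support_subset_verts {u v : α} (p : H.twoSection.Walk u v) (hu : u ∈ H.verts) :
    ∀ x ∈ p.support, x ∈ H.verts := by
  induction p with
  | nil => simpa using hu
  | cons h q ih =>
    simp only [SimpleGraph.Walk.support_cons, List.mem_cons, forall_eq_or_imp]
    exact ⟨hu, ih (H.mem_verts_of_adj h)⟩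

theorem dist_lt_card {u v : α} (hu : u ∈ H.verts) (h : H.twoSection.Reachable u v) :
    H.dist u v < #H.verts := by
  classical
  obtain ⟨p, hp, hlen⟩ := h.exists_path_of_dist
  have hsub : p.support.toFinset ⊆ H.verts := fun x hx =>
    H.support_subset_verts p hu x (List.mem_toFinset.mp hx)
  have := card_le_card hsub
  rw [List.toFinset_card_of_nodup hp.support_nodup, SimpleGraph.Walk.length_support] at this
  rw [dist, ← hlen]
  omega

theorem exists_adj_of_one_lt_card (hc : H.Connected) (h : 1 < #H.verts) :
    ∃ u ∈ H.verts, ∃ w ∈ H.verts, H.twoSection.Adj u w := by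
  obtain ⟨a, ha, b, hb, hab⟩ := one_lt_card.mp h
  obtain ⟨p⟩ := hc a ha b hb
  cases p with
  | nil => exact absurd rfl hab
  | cons hadj _ => exact ⟨a, ha, _, H.mem_verts_of_adj hadj, hadj⟩

noncomputable def pairDist (z : Sym2 α) : ℕ :=
  Sym2.lift ⟨fun u v => H.dist u v, fun _ _ => SimpleGraph.dist_comm⟩ z

@[simp]
theorem pairDist_mk (u v : α) : H.pairDist s(u, v) = H.dist u v := rfl

variable [DecidableEq α]

theorem wiener_eq_sum_pairDist :
    H.wiener = ∑ z ∈ {z ∈ H.verts.sym2 | ¬z.IsDiag}, H.pairDist z := rfl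

variable {H}

theorem pairDist_lt_card (hc : H.Connected) :
    ∀ z ∈ {z ∈ H.verts.sym2 | ¬z.IsDiag}, H.pairDist z < #H.verts :=
  forall_mem_sym2_filter_not_isDiag.mpr fun u hu v hv _ => H.dist_lt_card hu (hc u hu v hv)

theorem choose_two_le_wiener (hc : H.Connected) : (#H.verts).choose 2 ≤ H.wiener := by
  rw [← card_sym2_filter_not_isDiag, wiener_eq_sum_pairDist]
  refine le_of_eq_of_le (by simp) (card_nsmul_le_sum _ _ 1 ?_)
  exact forall_mem_sym2_filter_not_isDiag.mpr fun u hu v hv huv =>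
    (hc u hu v hv).pos_dist_of_ne huv

theorem wiener_le (hc : H.Connected) : H.wiener ≤ (#H.verts).choose 2 * (#H.verts - 1) := by
  rw [← card_sym2_filter_not_isDiag, wiener_eq_sum_pairDist, ← smul_eq_mul]
  exact sum_le_card_nsmul _ _ _ fun z hz => Nat.le_sub_one_of_lt (pairDist_lt_card hc z hz)

-- Sharpens `wiener_le`: one pair is adjacent, so it contributes `1` rather than `#H.verts - 1`.
theorem wiener_add_card_sub_two_le (hc : H.Connected) :
    H.wiener + (#H.verts - 2) ≤ (#H.verts).choose 2 * (#H.verts - 1) := by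
  by_cases hsmall : #H.verts ≤ 1
  · have := wiener_le hc
    omega
  obtain ⟨u, hu, w, hw, hadj⟩ := H.exists_adj_of_one_lt_card hc (by omega)
  set pairs := {z ∈ H.verts.sym2 | ¬z.IsDiag}
  have huw : s(u, w) ∈ pairs :=
    mem_filter.mpr ⟨mk_mem_sym2_iff.mpr ⟨hu, hw⟩, by simpa using hadj.ne⟩
  have hrest : ∑ z ∈ pairs.erase s(u, w), H.pairDist z ≤ #(pairs.erase s(u, w)) • (#H.verts - 1) :=
    sum_le_card_nsmul _ _ _ fun z hz =>
      Nat.le_sub_one_of_lt (pairDist_lt_card hc z (mem_of_mem_erase hz))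
  have hsplit := add_sum_erase pairs H.pairDist huw
  have hone : H.dist u w = 1 := SimpleGraph.dist_eq_one_iff_adj.mpr hadj
  rw [pairDist_mk, hone] at hsplit
  rw [card_erase_of_mem huw, card_sym2_filter_not_isDiag, smul_eq_mul] at hrest
  have hpos : 1 ≤ (#H.verts).choose 2 := Nat.choose_pos (by omega)
  have hmul : ((#H.verts).choose 2 - 1) * (#H.verts - 1) + (#H.verts - 1) =
      (#H.verts).choose 2 * (#H.verts - 1) := by
    rw [← Nat.succ_mul, Nat.succ_eq_add_one, Nat.sub_add_cancel hpos]
  rw [wiener_eq_sum_pairDist, ← hsplit]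
  omega

end Hypergraph'

theorem stmt2 {α : Type*} [DecidableEq α] (H : Hypergraph' α)
    (hn : H.verts.card ≤ 4) : ¬ H.IsSoltes := by
  rintro ⟨htwo, hconn, hdelete⟩
  obtain ⟨v, hv⟩ := Finset.card_pos.mp (show 0 < H.verts.card by omega)
  obtain ⟨hconn', hwiener⟩ := hdelete v hv
  have hcard : (H.delete v).verts.card = H.verts.card - 1 := Finset.card_erase_of_mem hv
  have hlower := H.choose_two_le_wiener hconn
  have hupper := (H.delete v).wiener_add_card_sub_two_le hconn'
  rw [hwiener, hcard] at hupper
  interval_cases H.verts.card <;> simp [Nat.choose] at hlower hupper <;> omega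
end

section
/- The set of integers k ≥ 2 for which there exists a k-uniform Šoltés hypergraph is infinite. -/
variable {α : Type*} {β : Type*}

/-!
Let `H` be the hypergraph on the `n`-cycle whose edges are the `n` arcs of `k` consecutive
vertices, with `n < 2k`. Any two vertices lie on a common arc, so `W(H) = C(n, 2)`. Counting
positions `1, …, n - 1` forward from a deleted vertex `v`, the arcs avoiding `v` are the intervals
of length `k`, so in `H \ v` two vertices are adjacent when they are fewer than `k` apart and at
distance `2` otherwise. Shifting the larger coordinate of a far pair down by `k - 1` shows there
are `C(n - k, 2)` far pairs, so `W(H \ v) = C(n - 1, 2) + C(n - k, 2)`, which equals `W(H)`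
exactly when `C(n - k, 2) = n - 1`. For every `m ≥ 5` this holds with `n = C(m, 2) + 1` and
`k = n - m`.
-/

open Finset

theorem Finset.card_sym2_filter_not_isDiag_s7 [DecidableEq α] (s : Finset α) :
    #{p ∈ s.sym2 | ¬p.IsDiag} = (#s).choose 2 := by
  rw [sym2_eq_image, Sym2.filter_image_mk_not_isDiag, Sym2.card_image_offDiag]

theorem Finset.card_offDiag_filter_lt [LinearOrder α] (s : Finset α) :
    #{p ∈ s.offDiag | p.1 < p.2} = (#s).choose 2 := by
  have := sum_sym2_filter_not_isDiag s fun _ => 1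
  simp only [sum_const, smul_eq_mul, mul_one, card_sym2_filter_not_isDiag_s7] at this
  exact this.symm

theorem Finset.sum_sym2_filter_not_isDiag_nbij' {M : Type*} [DecidableEq α] [DecidableEq β]
    [AddCommMonoid M] {s : Finset α} {t : Finset β} (i : α → β) (j : β → α)
    (hi : ∀ a ∈ s, i a ∈ t) (hj : ∀ b ∈ t, j b ∈ s) (left_inv : ∀ a ∈ s, j (i a) = a)
    (right_inv : ∀ b ∈ t, i (j b) = b) (f : Sym2 α → M) :
    ∑ p ∈ s.sym2 with ¬p.IsDiag, f p = ∑ q ∈ t.sym2 with ¬q.IsDiag, f (q.map j) := by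
  refine sum_nbij' (Sym2.map i) (Sym2.map j) ?_ ?_ ?_ ?_ ?_
  all_goals
    intro p hp
    induction p using Sym2.ind
    simp_all
  · exact fun h => hp.2 (by rw [← left_inv _ hp.1.1, h, left_inv _ hp.1.2])
  · exact fun h => hp.2 (by rw [← right_inv _ hp.1.1, h, right_inv _ hp.1.2])

theorem Finset.card_offDiag_Ico_filter_add_le (n k : ℕ) (hk : 1 ≤ k) :
    #{q ∈ (Ico 1 n).offDiag | q.1 < q.2 ∧ q.1 + k ≤ q.2} = (n - k).choose 2 := by
  have := card_offDiag_filter_lt (Ico 1 (n + 1 - k))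
  rw [Nat.card_Ico, show n + 1 - k - 1 = n - k by omega] at this
  rw [← this]
  refine card_nbij' (fun q => (q.1, q.2 + 1 - k)) (fun q => (q.1, q.2 + k - 1)) ?_ ?_ ?_ ?_
  all_goals
    rintro ⟨a, b⟩ h
    simp only [coe_filter, mem_offDiag, mem_Ico, Set.mem_ofPred_eq, Prod.mk.injEq, true_and]
      at h ⊢
    omega

theorem Finset.sum_offDiag_Ico_filter_lt_ite (n k : ℕ) (hk : 1 ≤ k) :
    ∑ q ∈ (Ico 1 n).offDiag with q.1 < q.2, (if q.2 < q.1 + k then 1 else 2) =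
      (n - 1).choose 2 + (n - k).choose 2 := by
  have h (q : ℕ × ℕ) : (if q.2 < q.1 + k then 1 else 2) = 1 + if q.1 + k ≤ q.2 then 1 else 0 := by
    split_ifs <;> omega
  simp only [h, sum_add_distrib, sum_boole, filter_filter, card_offDiag_Ico_filter_add_le n k hk,
    Nat.cast_id, ← card_eq_sum_ones, card_offDiag_filter_lt, Nat.card_Ico]

theorem SimpleGraph.dist_eq_two {V : Type*} {G : SimpleGraph V} {u w x : V} (hu : G.Adj u w)
    (hx : G.Adj w x) (hne : u ≠ x) (hnadj : ¬G.Adj u x) : G.dist u x = 2 :=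
  le_antisymm (by simpa using dist_le (hu.toWalk.append hx.toWalk))
    ((hu.reachable.trans hx.reachable).one_lt_dist_of_ne_of_not_adj hne hnadj)

theorem Nat.two_mul_le_choose_two {m : ℕ} (hm : 5 ≤ m) : 2 * m ≤ m.choose 2 := by
  rw [Nat.choose_two_right, Nat.le_div_iff_mul_le two_pos]
  calc 2 * m * 2 = m * 4 := by ring
    _ ≤ m * (m - 1) := Nat.mul_le_mul_left m (by omega)

theorem Hypergraph'.wiener_eq_choose_two [DecidableEq α] (H : Hypergraph' α)
    (hadj : ∀ u ∈ H.verts, ∀ w ∈ H.verts, u ≠ w → H.twoSection.Adj u w) :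
    H.wiener = (#H.verts).choose 2 := by
  rw [wiener, ← card_sym2_filter_not_isDiag_s7, card_eq_sum_ones]
  refine sum_congr rfl fun p hp => ?_
  induction p using Sym2.ind with
  | _ u w =>
    simp only [mem_filter, Finset.mk_mem_sym2_iff, Sym2.mk_isDiag_iff] at hp
    exact SimpleGraph.dist_eq_one_iff_adj.mpr (hadj u hp.1.1 w hp.1.2 hp.2)

namespace CyclicArcs

def offset (n a b : ℕ) : ℕ := ((b : ZMod n) - a).val

def arc (n k i : ℕ) : Finset ℕ := (range k).image fun j => (i + j) % n

variable {n k a b i p v x : ℕ}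

theorem offset_lt [NeZero n] (a b : ℕ) : offset n a b < n := ZMod.val_lt _

theorem offset_eq (ha : a < n) (hb : b < n) :
    offset n a b = if a ≤ b then b - a else b + n - a := by
  have : ((b : ZMod n) - a) = ((b + n - a : ℕ) : ZMod n) := by
    rw [Nat.cast_sub (by omega), Nat.cast_add, ZMod.natCast_self, add_zero]
  rw [offset, this, ZMod.val_natCast]
  split_ifs with h
  · rw [show b + n - a = b - a + n by omega, Nat.add_mod_right, Nat.mod_eq_of_lt (by omega)]
  · exact Nat.mod_eq_of_lt (by omega)

theorem offset_self (a : ℕ) : offset n a a = 0 := by simp [offset]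

theorem offset_add_offset (ha : a < n) (hb : b < n) (hab : a ≠ b) :
    offset n a b + offset n b a = n := by
  rw [offset_eq ha hb, offset_eq hb ha]
  split_ifs <;> omega

theorem offset_add_mod (i a : ℕ) : offset n i ((i + a) % n) = a % n := by
  rw [offset, ZMod.natCast_mod, Nat.cast_add, add_sub_cancel_left, ZMod.val_natCast]

theorem add_offset_mod [NeZero n] (i : ℕ) (hx : x < n) : (i + offset n i x) % n = x := by
  rw [← ZMod.val_natCast, Nat.cast_add, offset, ZMod.natCast_zmod_val, add_sub_cancel,
    ZMod.val_natCast_of_lt hx]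

theorem offset_add_mod_add_mod [NeZero n] (v a p : ℕ) :
    offset n ((v + p) % n) ((v + a) % n) = offset n (offset n v ((v + p) % n)) a := by
  simp only [offset, ZMod.natCast_mod, ZMod.natCast_zmod_val, Nat.cast_add]
  ring_nf

theorem add_mod_inj [NeZero n] (v : ℕ) (ha : a < n) (hb : b < n) :
    (v + a) % n = (v + b) % n ↔ a = b := by
  refine ⟨fun h => ?_, fun h => h ▸ rfl⟩
  simpa [offset_add_mod, Nat.mod_eq_of_lt, ha, hb] using congrArg (offset n v) h

theorem offset_pos [NeZero n] (hv : v < n) (hx : x < n) (hxv : x ≠ v) : 0 < offset n v x := by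
  refine Nat.pos_of_ne_zero fun h0 => hxv ?_
  rw [← add_offset_mod v hx, h0, add_zero, Nat.mod_eq_of_lt hv]

theorem mem_arc [NeZero n] : x ∈ arc n k i ↔ x < n ∧ offset n i x < k := by
  constructor
  · rintro hx
    obtain ⟨j, hj, rfl⟩ := mem_image.mp hx
    rw [offset_add_mod]
    exact ⟨Nat.mod_lt _ (NeZero.pos n), (Nat.mod_le j n).trans_lt (mem_range.mp hj)⟩
  · rintro ⟨hx, hk⟩
    exact mem_image.mpr ⟨offset n i x, mem_range.mpr hk, add_offset_mod i hx⟩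

theorem mem_arc_add_mod [NeZero n] (v a : ℕ) (hp : p < n) :
    (v + a) % n ∈ arc n k ((v + p) % n) ↔ offset n p a < k := by
  rw [mem_arc, offset_add_mod_add_mod, offset_add_mod, Nat.mod_eq_of_lt hp]
  exact and_iff_right (Nat.mod_lt _ (NeZero.pos n))

theorem self_mem_arc_add_mod [NeZero n] (hv : v < n) (hp : p < n) :
    v ∈ arc n k ((v + p) % n) ↔ offset n p 0 < k := by
  simpa [Nat.mod_eq_of_lt hv] using mem_arc_add_mod (k := k) v 0 hp

theorem card_arc (hk : k ≤ n) (i : ℕ) : #(arc n k i) = k := by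
  rw [arc, card_image_of_injOn, card_range]
  intro a ha b hb hab
  simp only [coe_range, Set.mem_Iio] at ha hb hab
  have := congrArg (offset n i) hab
  rwa [offset_add_mod, offset_add_mod, Nat.mod_eq_of_lt (by omega), Nat.mod_eq_of_lt (by omega)]
    at this

end CyclicArcs

open CyclicArcs

namespace Hypergraph'

def cyclicArcs (n k : ℕ) (hk : 2 ≤ k) (hkn : k ≤ n) : Hypergraph' ℕ where
  verts := range n
  edges := (range n).image (arc n k)
  edge_sub := by
    have : NeZero n := ⟨by omega⟩
    simp only [mem_image, mem_range, forall_exists_index, and_imp]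
    rintro _ i - rfl x hx
    exact mem_range.mpr (mem_arc.mp hx).1
  edge_card := by
    simp only [mem_image, mem_range, forall_exists_index, and_imp]
    rintro _ i - rfl
    rw [card_arc hkn]
    exact hk

variable {n k a b u v w : ℕ} (hk : 2 ≤ k) (hkn : k ≤ n)

theorem card_of_mem_edges_cyclicArcs : ∀ e ∈ (cyclicArcs n k hk hkn).edges, #e = k := by
  simp only [cyclicArcs, mem_image, forall_exists_index, and_imp]
  rintro _ i - rfl
  exact card_arc hkn i

theorem twoSection_cyclicArcs_adj (hn : n < 2 * k) (hu : u < n) (hw : w < n) (huw : u ≠ w) :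
    (cyclicArcs n k hk hkn).twoSection.Adj u w := by
  have : NeZero n := ⟨by omega⟩
  have hmem {x y : ℕ} (hx : x < n) (hy : y < n) (hxy : offset n x y < k) :
      ∃ e ∈ (cyclicArcs n k hk hkn).edges, x ∈ e ∧ y ∈ e :=
    ⟨arc n k x, mem_image_of_mem _ (mem_range.mpr hx),
      mem_arc.mpr ⟨hx, by rw [offset_self]; omega⟩, mem_arc.mpr ⟨hy, hxy⟩⟩
  have := offset_add_offset hu hw huw
  refine ⟨huw, ?_⟩
  rcases lt_or_ge (offset n u w) k with h | h
  · exact hmem hu hw h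
  · obtain ⟨e, he, hw, hu⟩ := hmem hw hu (by omega)
    exact ⟨e, he, hu, hw⟩

theorem mem_edges_delete_cyclicArcs (hv : v < n) {e : Finset ℕ} :
    e ∈ ((cyclicArcs n k hk hkn).delete v).edges ↔
      ∃ p < n, k ≤ offset n p 0 ∧ arc n k ((v + p) % n) = e := by
  have : NeZero n := ⟨by omega⟩
  simp only [delete, cyclicArcs, mem_filter, mem_image, mem_range]
  constructor
  · rintro ⟨⟨i, hi, rfl⟩, hvi⟩
    rw [← add_offset_mod v hi, self_mem_arc_add_mod hv (offset_lt v i), not_lt] at hvi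
    exact ⟨offset n v i, offset_lt v i, hvi, by rw [add_offset_mod v hi]⟩
  · rintro ⟨p, hp, hvp, rfl⟩
    exact ⟨⟨_, Nat.mod_lt _ (NeZero.pos n), rfl⟩, by rwa [self_mem_arc_add_mod hv hp, not_lt]⟩

theorem twoSection_delete_cyclicArcs_adj_iff (hkn' : k < n) (hv : v < n) (ha : 0 < a)
    (ha' : a < n) (hb : 0 < b) (hb' : b < n) (hab : a ≠ b) :
    ((cyclicArcs n k hk hkn).delete v).twoSection.Adj ((v + a) % n) ((v + b) % n) ↔
      a < b + k ∧ b < a + k := by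
  have : NeZero n := ⟨by omega⟩
  have hoff {p x : ℕ} (hp : p < n) (hx : x < n) := offset_eq hp hx
  simp only [twoSection, ne_eq, add_mod_inj v ha' hb', hab, not_false_eq_true, true_and,
    mem_edges_delete_cyclicArcs hk hkn hv]
  constructor
  · rintro ⟨_, ⟨p, hp, hvp, rfl⟩, hap, hbp⟩
    rw [mem_arc_add_mod v a hp, hoff hp ha'] at hap
    rw [mem_arc_add_mod v b hp, hoff hp hb'] at hbp
    rw [hoff hp (by omega : 0 < n)] at hvp
    split_ifs at * <;> omega
  · rintro ⟨hab, hba⟩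
    set p := min (min a b) (n - k)
    refine ⟨_, ⟨p, by omega, ?_, rfl⟩, ?_, ?_⟩
    · rw [hoff (by omega) (by omega)]
      split_ifs <;> omega
    · rw [mem_arc_add_mod v a (by omega), hoff (by omega) ha']
      split_ifs <;> omega
    · rw [mem_arc_add_mod v b (by omega), hoff (by omega) hb']
      split_ifs <;> omega

theorem dist_delete_cyclicArcs (hkn' : k < n) (hn : n < 2 * k) (hv : v < n) (ha : 0 < a)
    (hab : a < b) (hb : b < n) :
    ((cyclicArcs n k hk hkn).delete v).dist ((v + a) % n) ((v + b) % n) =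
      if b < a + k then 1 else 2 := by
  have : NeZero n := ⟨by omega⟩
  have hadj {a b : ℕ} := twoSection_delete_cyclicArcs_adj_iff hk hkn (a := a) (b := b) hkn' hv
  split_ifs with h
  · exact SimpleGraph.dist_eq_one_iff_adj.mpr
      ((hadj ha (by omega) (by omega) hb (by omega)).mpr ⟨by omega, h⟩)
  · -- common neighbour: the vertex `b + 1 - k` steps after `v`
    refine SimpleGraph.dist_eq_two (w := (v + (b + 1 - k)) % n)
      ((hadj ha (by omega) (by omega) (by omega) (by omega)).mpr ⟨by omega, by omega⟩)
      ((hadj (by omega) (by omega) (by omega) hb (by omega)).mpr ⟨by omega, by omega⟩)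
      (by rw [ne_eq, add_mod_inj v (by omega) hb]; omega) ?_
    rw [hadj ha (by omega) (by omega) hb (by omega)]
    omega

theorem connected_delete_cyclicArcs (hkn' : k < n) (hn : n < 2 * k) (hv : v < n) :
    ((cyclicArcs n k hk hkn).delete v).Connected := by
  have : NeZero n := ⟨by omega⟩
  intro x hx y hy
  simp only [delete, cyclicArcs, mem_erase, mem_range] at hx hy
  wlog hxy : offset n v x ≤ offset n v y generalizing x y
  · exact (this y x hy hx (by omega)).symm
  rw [← add_offset_mod v hx.2, ← add_offset_mod v hy.2]
  rcases hxy.eq_or_lt with h | h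
  · rw [h]
  refine SimpleGraph.Reachable.of_dist_ne_zero ?_
  rw [← dist, dist_delete_cyclicArcs hk hkn hkn' hn hv (offset_pos hv hx.2 hx.1) h (offset_lt v y)]
  split_ifs <;> simp

theorem wiener_delete_cyclicArcs (hkn' : k < n) (hn : n < 2 * k) (hv : v < n) :
    ((cyclicArcs n k hk hkn).delete v).wiener = (n - 1).choose 2 + (n - k).choose 2 := by
  have : NeZero n := ⟨by omega⟩
  have hv_eq : (v + 0) % n = v := Nat.mod_eq_of_lt hv
  rw [wiener, ← sum_offDiag_Ico_filter_lt_ite n k (by omega), sum_sym2_filter_not_isDiag_nbij'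
    (t := Ico 1 n) (offset n v) (fun a => (v + a) % n) ?_ ?_ ?_ ?_, sum_sym2_filter_not_isDiag]
  · refine sum_congr rfl fun q hq => ?_
    simp only [mem_filter, mem_offDiag, mem_Ico] at hq
    exact dist_delete_cyclicArcs hk hkn hkn' hn hv (by omega) hq.2 (by omega)
  all_goals
    intro x hx
    simp only [delete, cyclicArcs, mem_erase, mem_range, mem_Ico] at hx ⊢
  · exact ⟨offset_pos hv hx.2 hx.1, offset_lt v x⟩
  · refine ⟨fun h => ?_, Nat.mod_lt _ (NeZero.pos n)⟩
    have := (add_mod_inj v hx.2 (NeZero.pos n)).mp (h.trans hv_eq.symm)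
    omega
  · exact add_offset_mod v hx.2
  · rw [offset_add_mod, Nat.mod_eq_of_lt hx.2]

theorem isSoltes_cyclicArcs (hkn' : k < n) (hn : n < 2 * k)
    (hchoose : (n - k).choose 2 = n - 1) : (cyclicArcs n k hk hkn).IsSoltes := by
  have hadj : ∀ u ∈ (cyclicArcs n k hk hkn).verts, ∀ w ∈ (cyclicArcs n k hk hkn).verts,
      u ≠ w → (cyclicArcs n k hk hkn).twoSection.Adj u w := fun u hu w hw =>
    twoSection_cyclicArcs_adj hk hkn hn (mem_range.mp hu) (mem_range.mp hw)
  refine ⟨by simp only [cyclicArcs, card_range]; omega, fun u hu w hw => ?_, fun v hv => ⟨?_, ?_⟩⟩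
  · rcases eq_or_ne u w with rfl | huw
    · rfl
    · exact (hadj u hu w hw huw).reachable
  · exact connected_delete_cyclicArcs hk hkn hkn' hn (mem_range.mp hv)
  · rw [wiener_delete_cyclicArcs hk hkn hkn' hn (mem_range.mp hv), wiener_eq_choose_two _ hadj,
      hchoose]
    obtain ⟨m, rfl⟩ : ∃ m, n = m + 1 := ⟨n - 1, by omega⟩
    simp only [cyclicArcs, card_range, Nat.add_sub_cancel]
    rw [Nat.choose_succ_succ', Nat.choose_one_right, add_comm]

theorem exists_isSoltes_uniform {m : ℕ} (hm : 5 ≤ m) :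
    ∃ H : Hypergraph' ℕ, H.IsSoltes ∧ ∀ e ∈ H.edges, #e = m.choose 2 + 1 - m := by
  have := Nat.two_mul_le_choose_two hm
  have hk : 2 ≤ m.choose 2 + 1 - m := by omega
  have hkn : m.choose 2 + 1 - m ≤ m.choose 2 + 1 := by omega
  refine ⟨_, isSoltes_cyclicArcs hk hkn (by omega) (by omega) ?_,
    card_of_mem_edges_cyclicArcs hk hkn⟩
  rw [show m.choose 2 + 1 - (m.choose 2 + 1 - m) = m by omega, Nat.add_sub_cancel]

end Hypergraph'

theorem stmt7 :
    {k : ℕ | 2 ≤ k ∧ ∃ H : Hypergraph' ℕ, H.IsSoltes ∧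
      ∀ e ∈ H.edges, e.card = k}.Infinite := by
  refine Set.infinite_of_forall_exists_gt fun N => ?_
  have := Nat.two_mul_le_choose_two (m := N + 5) (by omega)
  exact ⟨_, ⟨by omega, Hypergraph'.exists_isSoltes_uniform (m := N + 5) (by omega)⟩, by omega⟩
end
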